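/- For an integer k > 20 and γ ∈ (π/8, π/4), let σ_{k,γ} = √( cos(2γ) / cos(2(γ − π/k)) ). Let kₙ = 100·2ⁿ and γₙ = π/4 − π/√kₙ for n ≥ 1. Then: (i) 0 < σ_{kₙ,γₙ} < 1 for every n ≥ 1; (ii) 0 ≤ 1 − (σ_{kₙ,γₙ})² ≤ (π/2)·(1/√kₙ) for every n ≥ 1; and (iii) the infinite product ∏_{n=1}^∞ σ_{kₙ,γₙ} converges to a limit lying in the open interval (0, 1). -/

import Mathlib

/-!
With `x = 2γ` and `y = 2γ - 2π/k` we have `0 ≤ y < x < π/2` and `σ² = cos x / cos y ∈ (0, 1)`.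
Since `cos` is 1-Lipschitz and, by Jordan's inequality, `cos y ≥ 1 - 2x/π`, we get
`1 - σ² ≤ π (x - y) / (π - 2x)`, which for `γₙ` is exactly `π / (2√kₙ)`. These bounds decay
geometrically in `n`, so `∑ log σₙ` converges to a negative number and the partial products tend
to its exponential.
-/

open Real Filter

/-- `σ_{k,γ} = √( cos(2γ) / cos(2(γ − π/k)) )`. -/
noncomputable def sigma' (k : ℕ) (γ : ℝ) : ℝ :=
  Real.sqrt (Real.cos (2 * γ) / Real.cos (2 * (γ - π / k)))

/-- `kₙ = 100·2ⁿ`. -/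
def kseq (n : ℕ) : ℕ := 100 * 2 ^ n

/-- `γₙ = π/4 − π/√kₙ`. -/
noncomputable def gseq (n : ℕ) : ℝ := π / 4 - π / Real.sqrt (kseq n)

theorem Real.cos_div_cos_mem_Ioo {x y : ℝ} (hy : 0 ≤ y) (hyx : y < x) (hx : x < π / 2) :
    cos x / cos y ∈ Set.Ioo 0 1 := by
  have hcosx : 0 < cos x := cos_pos_of_mem_Ioo ⟨by linarith, hx⟩
  have hcos : cos x < cos y := cos_lt_cos_of_nonneg_of_le_pi hy (by linarith) hyx
  exact ⟨div_pos hcosx (hcosx.trans hcos), (div_lt_one (hcosx.trans hcos)).mpr hcos⟩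

theorem Real.one_sub_cos_div_cos_le {x y : ℝ} (hy : 0 ≤ y) (hyx : y ≤ x) (hx : x < π / 2) :
    1 - cos x / cos y ≤ π * (x - y) / (π - 2 * x) := by
  have hπx : 0 < π - 2 * x := by linarith
  have hcosy : (π - 2 * x) / π ≤ cos y := calc
    (π - 2 * x) / π = 1 - 2 / π * x := by field_simp
    _ ≤ 1 - 2 / π * y := by gcongr
    _ ≤ cos y := one_sub_mul_le_cos hy (by linarith)
  have hcosy_pos : 0 < cos y := (div_pos hπx pi_pos).trans_le hcosy
  have hdiff : cos y - cos x ≤ x - y := by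
    have := abs_cos_sub_cos_le y x
    rw [abs_sub_comm y x, abs_of_nonneg (sub_nonneg.mpr hyx)] at this
    exact (le_abs_self _).trans this
  calc 1 - cos x / cos y = (cos y - cos x) / cos y := by field_simp
    _ ≤ (x - y) / ((π - 2 * x) / π) := by gcongr
    _ = π * (x - y) / (π - 2 * x) := by field_simp

theorem sigma'_mem_Ioo {k : ℕ} {γ : ℝ} (hk : 0 < k) (hγk : π / k ≤ γ) (hγ : γ < π / 4) :
    sigma' k γ ∈ Set.Ioo 0 1 := by
  have hπk : 0 < π / k := by positivity
  obtain ⟨hpos, hlt⟩ := Real.cos_div_cos_mem_Ioo (x := 2 * γ) (y := 2 * (γ - π / k))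
    (by linarith) (by linarith) (by linarith)
  exact ⟨Real.sqrt_pos.mpr hpos, (Real.sqrt_lt' one_pos).mpr (by rwa [one_pow])⟩

theorem one_sub_sigma'_sq_le {k : ℕ} {γ : ℝ} (hγk : π / k ≤ γ) (hγ : γ < π / 4) :
    1 - sigma' k γ ^ 2 ≤ 2 * π ^ 2 / (k * (π - 4 * γ)) := by
  have hπk : 0 ≤ π / k := by positivity
  have hcos := Real.one_sub_cos_div_cos_le (x := 2 * γ) (y := 2 * (γ - π / k))
    (by linarith) (by linarith) (by linarith)
  have hnonneg : 0 ≤ cos (2 * γ) / cos (2 * (γ - π / k)) :=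
    div_nonneg (cos_nonneg_of_mem_Icc ⟨by linarith, by linarith⟩)
      (cos_nonneg_of_mem_Icc ⟨by linarith, by linarith⟩)
  rw [sigma', Real.sq_sqrt hnonneg]
  exact hcos.trans_eq (by rw [div_mul_eq_div_div]; ring)

theorem pi_div_le_pi_div_four_sub_pi_div_sqrt {k : ℕ} (hk : 25 ≤ k) :
    π / k ≤ π / 4 - π / √k := by
  set s := √(k : ℝ)
  have hks : (k : ℝ) = s ^ 2 := (Real.sq_sqrt k.cast_nonneg).symm
  have hs5 : 5 ≤ s := Real.le_sqrt_of_sq_le (by exact_mod_cast hk)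
  have h1 : π / s ≤ π / 5 := div_le_div_of_nonneg_left pi_pos.le (by norm_num) hs5
  have h2 : π / s ^ 2 ≤ π / 25 := div_le_div_of_nonneg_left pi_pos.le (by norm_num) (by nlinarith)
  rw [hks]
  linarith [pi_pos]

theorem sigma'_pi_div_four_sub_mem_Ioo {k : ℕ} (hk : 25 ≤ k) :
    sigma' k (π / 4 - π / √k) ∈ Set.Ioo 0 1 :=
  sigma'_mem_Ioo (by omega) (pi_div_le_pi_div_four_sub_pi_div_sqrt hk)
    (sub_lt_self _ (by positivity))

theorem one_sub_sigma'_pi_div_four_sub_sq_le {k : ℕ} (hk : 25 ≤ k) :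
    1 - sigma' k (π / 4 - π / √k) ^ 2 ≤ π / 2 * (1 / √k) := by
  refine (one_sub_sigma'_sq_le (pi_div_le_pi_div_four_sub_pi_div_sqrt hk)
    (sub_lt_self _ (by positivity))).trans_eq ?_
  set s := √(k : ℝ)
  have hks : (k : ℝ) = s ^ 2 := (Real.sq_sqrt k.cast_nonneg).symm
  have hs0 : 0 < s := Real.sqrt_pos.mpr (by exact_mod_cast (by omega : 0 < k))
  rw [hks]
  field_simp
  ring

theorem le_kseq (n : ℕ) : 100 ≤ kseq n :=
  Nat.le_mul_of_pos_right 100 (Nat.two_pow_pos n)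

theorem sqrt_kseq (n : ℕ) : √(kseq n) = 10 * √2 ^ n := by
  have : (kseq n : ℝ) = (10 * √2 ^ n) ^ 2 := by
    rw [mul_pow, ← pow_mul, pow_mul', Real.sq_sqrt zero_le_two, kseq]
    push_cast
    ring
  rw [this, Real.sqrt_sq (by positivity)]

theorem summable_one_div_sqrt_kseq : Summable fun n => 1 / √(kseq n) := by
  simp_rw [sqrt_kseq, one_div, mul_inv, ← inv_pow]
  exact (summable_geometric_of_lt_one (by positivity)
    (inv_lt_one_of_one_lt₀ Real.one_lt_sqrt_two)).mul_left _

theorem Real.exists_tendsto_prod_range_mem_Ioo {f : ℕ → ℝ} (hf : ∀ n, f n ∈ Set.Ioo 0 1)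
    (hsum : Summable fun n => 1 - f n) :
    ∃ L ∈ Set.Ioo 0 1, Tendsto (fun m => ∏ i ∈ Finset.range m, f i) atTop (nhds L) := by
  have hlog : Summable fun n => log (f n) := by
    simpa using Real.summable_log_one_add_of_summable hsum.neg
  have hlog_neg : ∑' n, log (f n) < 0 := by
    have := hlog.neg.tsum_pos (fun n => neg_nonneg.mpr (log_nonpos (hf n).1.le (hf n).2.le)) 0
      (neg_pos.mpr (log_neg (hf 0).1 (hf 0).2))
    rwa [tsum_neg, neg_pos] at this
  exact ⟨exp (∑' n, log (f n)), ⟨exp_pos _, exp_lt_one_iff.mpr hlog_neg⟩,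
    (hasProd_of_hasSum_log (fun n => (hf n).1) hlog.hasSum).tendsto_prod_nat⟩

theorem stmt_18 :
    (∀ n : ℕ, 1 ≤ n → 0 < sigma' (kseq n) (gseq n) ∧ sigma' (kseq n) (gseq n) < 1) ∧
    (∀ n : ℕ, 1 ≤ n →
      0 ≤ 1 - (sigma' (kseq n) (gseq n)) ^ 2 ∧
      1 - (sigma' (kseq n) (gseq n)) ^ 2 ≤ (π / 2) * (1 / Real.sqrt (kseq n))) ∧
    (∃ L : ℝ, L ∈ Set.Ioo (0 : ℝ) 1 ∧
      Tendsto (fun m : ℕ => ∏ n ∈ Finset.Icc 1 m, sigma' (kseq n) (gseq n))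
        atTop (nhds L)) := by
  have hk n : 25 ≤ kseq n := (le_kseq n).trans' (by norm_num)
  have hσ n : sigma' (kseq n) (gseq n) ∈ Set.Ioo 0 1 := sigma'_pi_div_four_sub_mem_Ioo (hk n)
  have hbound n : 1 - sigma' (kseq n) (gseq n) ^ 2 ≤ π / 2 * (1 / √(kseq n)) :=
    one_sub_sigma'_pi_div_four_sub_sq_le (hk n)
  have hsum : Summable fun n => 1 - sigma' (kseq (n + 1)) (gseq (n + 1)) := by
    refine (summable_nat_add_iff 1).mpr <|
      (summable_one_div_sqrt_kseq.mul_left (π / 2)).of_nonneg_of_le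
        (fun n => sub_nonneg.mpr (hσ n).2.le) fun n => ?_
    have ⟨h0, h1⟩ := hσ n
    nlinarith [hbound n]
  obtain ⟨L, hL, hlim⟩ := Real.exists_tendsto_prod_range_mem_Ioo (fun n => hσ (n + 1)) hsum
  refine ⟨fun n _ => hσ n, fun n _ => ⟨?_, hbound n⟩, L, hL, hlim.congr fun m => ?_⟩
  · have ⟨h0, h1⟩ := hσ n
    nlinarith
  · rw [← Finset.Ico_add_one_right_eq_Icc, Finset.prod_Ico_eq_prod_range, Nat.add_sub_cancel]
    simp_rw [add_comm 1]
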